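/- General dGL equivalence for Angel: For every hybrid game α and all sets of states X, Y ⊆ S, Angel's semi-competitive winning region decomposes into a cooperative and a competitive zero-sum dGL winning region: ς_α(X,Y) = ς_{α^{-d}}(X ∩ Y) ∪ ς_α(X), where the regions on the right-hand side are the one-argument zero-sum dGL winning regions. -/
import Mathlib


open Set

/-- Hybrid games over a variable set `V`. Terms/ODE right-hand sides are
interpreted as functions from states `V → ℝ` to `ℝ`; tests and evolution
domain constraints are sets of states. -/
inductive Game (V : Type*) where
  | assign (x : V) (e : (V → ℝ) → ℝ)
  | ode (x : V) (f : (V → ℝ) → ℝ) (Q : Set (V → ℝ))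
  | test (Q : Set (V → ℝ))
  | choice (a b : Game V)
  | seq (a b : Game V)
  | dual (a : Game V)
  | star (a : Game V)

variable {V : Type*} [DecidableEq V]

/-- `φ : ℝ → (V → ℝ)` (restricted to `[0,r]`) is a solution of `x' = f(x) & Q`
of duration `r ≥ 0`: `t ↦ φ t x` is differentiable with derivative `f (φ s)`
at each `s ∈ [0,r]`, `φ s ∈ Q` on `[0,r]`, and all other variables stay
constant along `φ`. -/
def IsSolution (x : V) (f : (V → ℝ) → ℝ) (Q : Set (V → ℝ)) (r : ℝ)
    (φ : ℝ → (V → ℝ)) : Prop :=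
  0 ≤ r ∧
  (∀ s ∈ Set.Icc 0 r, HasDerivAt (fun t => φ t x) (f (φ s)) s) ∧
  (∀ s ∈ Set.Icc 0 r, φ s ∈ Q) ∧
  (∀ s ∈ Set.Icc 0 r, ∀ y, y ≠ x → φ s y = φ 0 y)

mutual
/-- Angel's semi-competitive winning region ς_α(X,Y). -/
def angel : Game V → Set (V → ℝ) → Set (V → ℝ) → Set (V → ℝ)
  | .assign x e, X, _ => {ω | Function.update ω x (e ω) ∈ X}
  | .ode x f Q, X, _ =>
      {ω | ∃ r φ, IsSolution x f Q r φ ∧ φ 0 = ω ∧ φ r ∈ X}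
  | .test Q, X, _ => Q ∩ X
  | .choice a b, X, Y => angel a X Y ∪ angel b X Y
  | .seq a b, X, Y => angel a (angel b X Y) (demon b X Y)
  | .dual a, X, Y => demon a Y X
  | .star a, X, Y =>
      ⋂₀ {Z | X ∪ angel a Z Zᶜ ⊆ Z} ∪
      ⋂₀ {Z | (X ∩ Y) ∪ (angel a Z Z ∩ demon a Z Z) ⊆ Z}

/-- Demon's semi-competitive winning region δ_α(X,Y). -/
def demon : Game V → Set (V → ℝ) → Set (V → ℝ) → Set (V → ℝ)
  | .assign x e, _, Y => {ω | Function.update ω x (e ω) ∈ Y}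
  | .ode x f Q, X, Y =>
      {ω | ∀ r φ, IsSolution x f Q r φ → φ 0 = ω → ∀ s ∈ Set.Icc 0 r, φ s ∈ Y} ∪
      {ω | ∃ r φ, IsSolution x f Q r φ ∧ φ 0 = ω ∧ ∃ s ∈ Set.Icc 0 r, φ s ∈ X ∩ Y}
  | .test Q, _, Y => Qᶜ ∪ Y
  | .choice a b, X, Y =>
      (demon a X Y ∩ demon b X Y) ∪ (demon a X Y ∩ angel a X Y) ∪
      (demon b X Y ∩ angel b X Y)
  | .seq a b, X, Y => demon a (angel b X Y) (demon b X Y)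
  | .dual a, X, Y => angel a Y X
  | .star a, X, Y =>
      ⋃₀ {Z | Z ⊆ Y ∩ demon a Zᶜ Z} ∪
      ⋂₀ {Z | (X ∩ Y) ∪ (angel a Z Z ∩ demon a Z Z) ⊆ Z}
end

/-- Angel's one-argument zero-sum dGL winning region ς_α(X). -/
def dglAngel : Game V → Set (V → ℝ) → Set (V → ℝ)
  | .assign x e, X => {ω | Function.update ω x (e ω) ∈ X}
  | .ode x f Q, X => {ω | ∃ r φ, IsSolution x f Q r φ ∧ φ 0 = ω ∧ φ r ∈ X}
  | .test Q, X => Q ∩ X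
  | .choice a b, X => dglAngel a X ∪ dglAngel b X
  | .seq a b, X => dglAngel a (dglAngel b X)
  | .dual a, X => (dglAngel a Xᶜ)ᶜ
  | .star a, X => ⋂₀ {Z | X ∪ dglAngel a Z ⊆ Z}

/-- Demon's one-argument zero-sum dGL winning region δ_α(X) = (ς_α(Xᶜ))ᶜ. -/
def dglDemon (g : Game V) (X : Set (V → ℝ)) : Set (V → ℝ) :=
  (dglAngel g Xᶜ)ᶜ

/-- Systematization α^{-d}: removes all dual operators. -/
def Game.sys : Game V → Game V
  | .assign x e => .assign x e
  | .ode x f Q => .ode x f Q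
  | .test Q => .test Q
  | .choice a b => .choice a.sys b.sys
  | .seq a b => .seq a.sys b.sys
  | .dual a => a.sys
  | .star a => .star a.sys

theorem dglAngel_mono (α : Game V) : Monotone (dglAngel α) := by
  induction α with
  | assign x e => intro A B h ω hω; exact h hω
  | ode x f Q =>
      rintro A B h ω ⟨r, φ, hs, h0, hr⟩; exact ⟨r, φ, hs, h0, h hr⟩
  | test Q => intro A B h; exact inter_subset_inter_right _ h
  | choice a b iha ihb => intro A B h; exact union_subset_union (iha h) (ihb h)
  | seq a b iha ihb => intro A B h; exact iha (ihb h)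
  | dual a iha =>
      intro A B h
      exact compl_subset_compl.2 (iha (compl_subset_compl.2 h))
  | star a iha =>
      intro A B h
      exact sInter_subset_sInter fun Z hZ =>
        (union_subset_union_left _ h).trans hZ

theorem dglDemon_mono (α : Game V) : Monotone (dglDemon α) := by
  intro A B h
  exact compl_subset_compl.2 (dglAngel_mono α (compl_subset_compl.2 h))

theorem star_le {a : Game V} {X Z : Set (V → ℝ)}
    (h : X ∪ dglAngel a Z ⊆ Z) : dglAngel (.star a) X ⊆ Z :=
  sInter_subset_of_mem (by exact h)

theorem star_unfold (a : Game V) (X : Set (V → ℝ)) :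
    dglAngel (.star a) X = X ∪ dglAngel a (dglAngel (.star a) X) := by
  have h1 : X ∪ dglAngel a (dglAngel (.star a) X) ⊆ dglAngel (.star a) X := by
    apply subset_sInter
    intro Z hZ
    exact union_subset ((subset_union_left).trans hZ)
      ((dglAngel_mono a (sInter_subset_of_mem hZ)).trans ((subset_union_right).trans hZ))
  refine subset_antisymm (star_le ?_) h1
  exact union_subset subset_union_left
    ((dglAngel_mono a h1).trans subset_union_right)

theorem sys_empty (α : Game V) : dglAngel α.sys (∅ : Set (V → ℝ)) = ∅ := by
  induction α with
  | assign x e => simp [Game.sys, dglAngel]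
  | ode x f Q => simp [Game.sys, dglAngel]
  | test Q => simp [Game.sys, dglAngel]
  | choice a b iha ihb => simp [Game.sys, dglAngel, iha, ihb]
  | seq a b iha ihb => simp only [Game.sys, dglAngel, ihb, iha]
  | dual a iha => simpa [Game.sys] using iha
  | star a iha =>
      refine subset_antisymm (star_le ?_) (empty_subset _)
      simp [iha]
omit [DecidableEq V] in
theorem IsSolution.restrict {x : V} {f : (V → ℝ) → ℝ} {Q : Set (V → ℝ)}
    {r s : ℝ} {φ : ℝ → (V → ℝ)} (h : IsSolution x f Q r φ)
    (hs : s ∈ Set.Icc 0 r) : IsSolution x f Q s φ := by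
  obtain ⟨hr, hd, hQ, hc⟩ := h
  exact ⟨hs.1, fun t ht => hd t ⟨ht.1, ht.2.trans hs.2⟩,
    fun t ht => hQ t ⟨ht.1, ht.2.trans hs.2⟩,
    fun t ht => hc t ⟨ht.1, ht.2.trans hs.2⟩⟩

theorem coop (α : Game V) (A B : Set (V → ℝ)) :
    dglAngel α A ∩ (dglAngel α Bᶜ)ᶜ ⊆ dglAngel α.sys (A ∩ B) := by
  induction α generalizing A B with
  | assign x e =>
      rintro ω ⟨h1, h2⟩
      simp only [dglAngel, Game.sys, mem_setOf_eq, mem_compl_iff, mem_inter_iff] at *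
      exact ⟨h1, not_not.1 h2⟩
  | ode x f Q =>
      rintro ω ⟨⟨r, φ, hsol, h0, hA⟩, h2⟩
      refine ⟨r, φ, hsol, h0, hA, ?_⟩
      by_contra hB
      exact h2 ⟨r, φ, hsol, h0, hB⟩
  | test Q =>
      rintro ω ⟨⟨hQ, hA⟩, h2⟩
      refine ⟨hQ, hA, ?_⟩
      by_contra hB
      exact h2 ⟨hQ, hB⟩
  | choice a b iha ihb =>
      rintro ω ⟨h1, h2⟩
      simp only [dglAngel, mem_union, mem_compl_iff, not_or] at h1 h2
      rcases h1 with h | h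
      · exact Or.inl (iha A B ⟨h, h2.1⟩)
      · exact Or.inr (ihb A B ⟨h, h2.2⟩)
  | seq a b iha ihb =>
      intro ω hω
      have h1 : ω ∈ dglAngel a (dglAngel b A) ∩
          (dglAngel a ((dglAngel b Bᶜ)ᶜ)ᶜ)ᶜ := by
        rwa [compl_compl]
      have h2 := iha (dglAngel b A) ((dglAngel b Bᶜ)ᶜ) h1
      exact dglAngel_mono a.sys (ihb A B) h2
  | dual a iha =>
      intro ω hω
      have h1 : ω ∈ dglAngel a B ∩ (dglAngel a Aᶜ)ᶜ := by
        have := hω.2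
        simp only [dglAngel, compl_compl, mem_compl_iff, not_not] at this
        exact ⟨this, hω.1⟩
      have := iha B A h1
      rwa [inter_comm] at this
  | star a iha =>
      set K := dglAngel (Game.star a.sys) (A ∩ B) with hK
      set E := dglAngel (Game.star a) Bᶜ with hE
      have hsub : dglAngel (Game.star a) A ⊆ K ∪ E := by
        apply star_le
        apply union_subset
        · intro ω hω
          by_cases hB : ω ∈ B
          · left; rw [hK, star_unfold]; exact Or.inl ⟨hω, hB⟩
          · right; rw [hE, star_unfold]; exact Or.inl hB
        · intro ω hω
          by_cases hE' : ω ∈ dglAngel a E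
          · right; rw [hE, star_unfold]; exact Or.inr hE'
          · left
            have h1 : ω ∈ dglAngel a (K ∪ E) ∩ (dglAngel a Eᶜᶜ)ᶜ := by
              rw [compl_compl]; exact ⟨hω, hE'⟩
            have h2 := iha (K ∪ E) Eᶜ h1
            have h3 : (K ∪ E) ∩ Eᶜ ⊆ K := by
              rintro z ⟨hz | hz, hz'⟩
              · exact hz
              · exact absurd hz hz'
            have h4 := dglAngel_mono a.sys h3 h2
            rw [hK, star_unfold]
            exact Or.inr h4
      rintro ω ⟨h1, h2⟩
      rcases hsub h1 with h | h
      · exact h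
      · exact absurd h h2
theorem split_angel (α : Game V) (P Q : Set (V → ℝ)) :
    dglAngel α (P ∪ Q) ⊆ dglAngel α.sys P ∪ dglAngel α Q := by
  intro ω h
  by_cases hq : ω ∈ dglAngel α Q
  · exact Or.inr hq
  · left
    have h1 : ω ∈ dglAngel α (P ∪ Q) ∩ (dglAngel α Qᶜᶜ)ᶜ := by
      rw [compl_compl]; exact ⟨h, hq⟩
    have h2 := coop α (P ∪ Q) Qᶜ h1
    refine dglAngel_mono α.sys ?_ h2
    rintro z ⟨hz | hz, hz'⟩
    · exact hz
    · exact absurd hz hz'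

theorem split_demon (α : Game V) (P Q : Set (V → ℝ)) :
    dglDemon α (P ∪ Q) ⊆ dglAngel α.sys P ∪ dglDemon α Q := by
  intro ω h
  by_cases hq : ω ∈ dglDemon α Q
  · exact Or.inr hq
  · left
    have hq' : ω ∈ dglAngel α Qᶜ := by
      simpa [dglDemon] using hq
    have h2 := coop α Qᶜ (P ∪ Q) ⟨hq', h⟩
    refine dglAngel_mono α.sys ?_ h2
    rintro z ⟨hz', hz | hz⟩
    · exact hz
    · exact absurd hz hz'

theorem key_choice {S : Type*} {C C' W W' A A' : Set S}
    (hA : A ∩ W ⊆ C) (hB : A' ∩ W' ⊆ C') :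
    ((C ∪ W) ∩ (C' ∪ W')) ∪ ((C ∪ W) ∩ (C ∪ A)) ∪ ((C' ∪ W') ∩ (C' ∪ A')) =
      (C ∪ C') ∪ (W ∩ W') := by
  apply subset_antisymm
  · rintro ω ((⟨h1, h2⟩ | ⟨h1, h2⟩) | ⟨h1, h2⟩)
    · rcases h1 with h1 | h1
      · exact Or.inl (Or.inl h1)
      · rcases h2 with h2 | h2
        · exact Or.inl (Or.inr h2)
        · exact Or.inr ⟨h1, h2⟩
    · rcases h2 with h2 | h2
      · exact Or.inl (Or.inl h2)
      · rcases h1 with h1 | h1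
        · exact Or.inl (Or.inl h1)
        · exact Or.inl (Or.inl (hA ⟨h2, h1⟩))
    · rcases h2 with h2 | h2
      · exact Or.inl (Or.inr h2)
      · rcases h1 with h1 | h1
        · exact Or.inl (Or.inr h1)
        · exact Or.inl (Or.inr (hB ⟨h2, h1⟩))
  · rintro ω ((h | h) | ⟨h1, h2⟩)
    · exact Or.inl (Or.inr ⟨Or.inl h, Or.inl h⟩)
    · exact Or.inr ⟨Or.inl h, Or.inl h⟩
    · exact Or.inl (Or.inl ⟨Or.inr h1, Or.inr h2⟩)

theorem main_both (α : Game V) :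
    (∀ X Y : Set (V → ℝ), angel α X Y = dglAngel α.sys (X ∩ Y) ∪ dglAngel α X) ∧
    (∀ X Y : Set (V → ℝ), demon α X Y = dglAngel α.sys (X ∩ Y) ∪ dglDemon α Y) := by
  induction α with
  | assign x e =>
      refine ⟨fun X Y => ?_, fun X Y => ?_⟩
      · exact (union_eq_right.2 fun ω h => h.1).symm
      · ext ω
        constructor
        · intro h
          exact Or.inr fun hc => hc h
        · rintro (h | h)
          · exact h.2
          · exact not_not.1 h
  | ode x f Q =>
      refine ⟨fun X Y => ?_, fun X Y => ?_⟩
      · apply subset_antisymm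
        · intro ω h; exact Or.inr h
        · rintro ω (⟨r, φ, hsol, h0, hXY⟩ | h)
          · exact ⟨r, φ, hsol, h0, hXY.1⟩
          · exact h
      · apply subset_antisymm
        · rintro ω (h | ⟨r, φ, hsol, h0, s, hs, hXY⟩)
          · right
            rintro ⟨r, φ, hsol, h0, hYc⟩
            exact hYc (h r φ hsol h0 r ⟨hsol.1, le_rfl⟩)
          · exact Or.inl ⟨s, φ, hsol.restrict hs, h0, hXY⟩
        · rintro ω (⟨r, φ, hsol, h0, hXY⟩ | h)
          · exact Or.inr ⟨r, φ, hsol, h0, r, ⟨hsol.1, le_rfl⟩, hXY⟩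
          · left
            intro r φ hsol h0 s hs
            by_contra hY
            exact h ⟨s, φ, hsol.restrict hs, h0, hY⟩
  | test Q =>
      refine ⟨fun X Y => ?_, fun X Y => ?_⟩
      · refine (union_eq_right.2 ?_).symm
        rintro ω ⟨hQ, hX, _⟩
        exact ⟨hQ, hX⟩
      · ext ω
        constructor
        · rintro (h | h)
          · exact Or.inr fun hc => h hc.1
          · exact Or.inr fun hc => hc.2 h
        · rintro (⟨hQ, _, hY⟩ | h)
          · exact Or.inr hY
          · by_cases hQ : ω ∈ Q
            · exact Or.inr (not_not.1 fun hy => h ⟨hQ, hy⟩)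
            · exact Or.inl hQ
  | choice a b iha ihb =>
      obtain ⟨ih1a, ih2a⟩ := iha
      obtain ⟨ih1b, ih2b⟩ := ihb
      refine ⟨fun X Y => ?_, fun X Y => ?_⟩
      · rw [show angel (.choice a b) X Y = angel a X Y ∪ angel b X Y from rfl,
          ih1a, ih1b,
          show dglAngel (Game.choice a b).sys (X ∩ Y) =
            dglAngel a.sys (X ∩ Y) ∪ dglAngel b.sys (X ∩ Y) from rfl,
          show dglAngel (Game.choice a b) X = dglAngel a X ∪ dglAngel b X from rfl]
        apply subset_antisymm
        · rintro ω ((h | h) | (h | h))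
          · exact Or.inl (Or.inl h)
          · exact Or.inr (Or.inl h)
          · exact Or.inl (Or.inr h)
          · exact Or.inr (Or.inr h)
        · rintro ω ((h | h) | (h | h))
          · exact Or.inl (Or.inl h)
          · exact Or.inr (Or.inl h)
          · exact Or.inl (Or.inr h)
          · exact Or.inr (Or.inr h)
      · rw [show demon (.choice a b) X Y =
            (demon a X Y ∩ demon b X Y) ∪ (demon a X Y ∩ angel a X Y) ∪
            (demon b X Y ∩ angel b X Y) from rfl,
          ih1a, ih1b, ih2a, ih2b,
          show dglAngel (Game.choice a b).sys (X ∩ Y) =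
            dglAngel a.sys (X ∩ Y) ∪ dglAngel b.sys (X ∩ Y) from rfl,
          show dglDemon (Game.choice a b) Y =
            (dglAngel a Yᶜ ∪ dglAngel b Yᶜ)ᶜ from rfl, compl_union]
        exact key_choice (fun ω h => coop a X Y h) (fun ω h => coop b X Y h)
  | seq a b iha ihb =>
      obtain ⟨ih1a, ih2a⟩ := iha
      obtain ⟨ih1b, ih2b⟩ := ihb
      have e1 : ∀ X Y : Set (V → ℝ),
          angel b X Y ∩ demon b X Y = dglAngel b.sys (X ∩ Y) := by
        intro X Y
        rw [ih1b, ih2b]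
        apply subset_antisymm
        · rintro ω ⟨h1 | h1, h2 | h2⟩
          · exact h1
          · exact h1
          · exact h2
          · exact coop b X Y ⟨h1, h2⟩
        · exact fun ω h => ⟨Or.inl h, Or.inl h⟩
      refine ⟨fun X Y => ?_, fun X Y => ?_⟩
      · rw [show angel (.seq a b) X Y = angel a (angel b X Y) (demon b X Y) from rfl,
          ih1a, e1, ih1b,
          show dglAngel (Game.seq a b).sys (X ∩ Y) =
            dglAngel a.sys (dglAngel b.sys (X ∩ Y)) from rfl,
          show dglAngel (Game.seq a b) X = dglAngel a (dglAngel b X) from rfl]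
        apply subset_antisymm
        · exact union_subset subset_union_left (split_angel a _ _)
        · exact union_subset subset_union_left
            ((dglAngel_mono a subset_union_right).trans subset_union_right)
      · have hd : dglDemon (Game.seq a b) Y = dglDemon a (dglDemon b Y) := by
          simp only [dglDemon, compl_compl]
          rfl
        rw [show demon (.seq a b) X Y = demon a (angel b X Y) (demon b X Y) from rfl,
          ih2a, e1, ih2b,
          show dglAngel (Game.seq a b).sys (X ∩ Y) =
            dglAngel a.sys (dglAngel b.sys (X ∩ Y)) from rfl, hd]
        apply subset_antisymm
        · exact union_subset subset_union_left (split_demon a _ _)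
        · exact union_subset subset_union_left
            ((dglDemon_mono a subset_union_right).trans subset_union_right)
  | dual a iha =>
      obtain ⟨ih1a, ih2a⟩ := iha
      refine ⟨fun X Y => ?_, fun X Y => ?_⟩
      · rw [show angel (.dual a) X Y = demon a Y X from rfl, ih2a, inter_comm Y X]
        rfl
      · rw [show demon (.dual a) X Y = angel a Y X from rfl, ih1a, inter_comm Y X,
          show dglDemon (Game.dual a) Y = ((dglAngel a Yᶜᶜ)ᶜ)ᶜ from rfl,
          compl_compl, compl_compl]
        rfl
  | star a iha =>
      obtain ⟨ih1a, ih2a⟩ := iha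
      have h1 : ∀ Z : Set (V → ℝ), angel a Z Zᶜ = dglAngel a Z := by
        intro Z
        rw [ih1a, inter_compl_self, sys_empty, empty_union]
      have h2 : ∀ Z : Set (V → ℝ), angel a Z Z ∩ demon a Z Z = dglAngel a.sys Z := by
        intro Z
        rw [ih1a, ih2a, inter_self]
        apply subset_antisymm
        · rintro ω ⟨ha | ha, hd | hd⟩
          · exact ha
          · exact ha
          · exact hd
          · have := coop a Z Z ⟨ha, hd⟩
            rwa [inter_self] at this
        · exact fun ω h => ⟨Or.inl h, Or.inl h⟩
      have h3 : ∀ Z : Set (V → ℝ), demon a Zᶜ Z = dglDemon a Z := by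
        intro Z
        rw [ih2a, compl_inter_self, sys_empty, empty_union]
      refine ⟨fun X Y => ?_, fun X Y => ?_⟩
      · have e1 : {Z : Set (V → ℝ) | X ∪ angel a Z Zᶜ ⊆ Z} =
            {Z | X ∪ dglAngel a Z ⊆ Z} := by
          ext Z; rw [mem_setOf_eq, mem_setOf_eq, h1 Z]
        have e2 : {Z : Set (V → ℝ) | (X ∩ Y) ∪ (angel a Z Z ∩ demon a Z Z) ⊆ Z} =
            {Z | (X ∩ Y) ∪ dglAngel a.sys Z ⊆ Z} := by
          ext Z; rw [mem_setOf_eq, mem_setOf_eq, h2 Z]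
        rw [show angel (.star a) X Y =
            ⋂₀ {Z | X ∪ angel a Z Zᶜ ⊆ Z} ∪
            ⋂₀ {Z | (X ∩ Y) ∪ (angel a Z Z ∩ demon a Z Z) ⊆ Z} from rfl,
          e1, e2, union_comm]
        rfl
      · have e2 : {Z : Set (V → ℝ) | (X ∩ Y) ∪ (angel a Z Z ∩ demon a Z Z) ⊆ Z} =
            {Z | (X ∩ Y) ∪ dglAngel a.sys Z ⊆ Z} := by
          ext Z; rw [mem_setOf_eq, mem_setOf_eq, h2 Z]
        have e3 : ⋃₀ {Z : Set (V → ℝ) | Z ⊆ Y ∩ demon a Zᶜ Z} =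
            dglDemon (Game.star a) Y := by
          apply subset_antisymm
          · rintro ω ⟨Z, hZ, hω⟩
            rw [mem_setOf_eq, h3] at hZ
            have hZ' : dglAngel (Game.star a) Yᶜ ⊆ Zᶜ := by
              apply star_le
              apply union_subset
              · exact compl_subset_compl.2 (hZ.trans inter_subset_left)
              · intro z hz hzZ
                exact (hZ hzZ).2 hz
            exact fun hmem => hZ' hmem hω
          · intro ω hω
            refine ⟨(dglAngel (Game.star a) Yᶜ)ᶜ, ?_, hω⟩
            rw [mem_setOf_eq, h3]
            refine subset_inter ?_ ?_
            · intro z hz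
              by_contra hy
              exact hz (by rw [star_unfold]; exact Or.inl hy)
            · intro z hz hmem
              rw [compl_compl] at hmem
              exact hz (by rw [star_unfold]; exact Or.inr hmem)
        rw [show demon (.star a) X Y =
            ⋃₀ {Z | Z ⊆ Y ∩ demon a Zᶜ Z} ∪
            ⋂₀ {Z | (X ∩ Y) ∪ (angel a Z Z ∩ demon a Z Z) ⊆ Z} from rfl,
          e2, e3, union_comm]
        rfl

/-- General dGL equivalence for Angel:
`ς_α(X,Y) = ς_{α^{-d}}(X ∩ Y) ∪ ς_α(X)`. -/
theorem general_dGL_equivalence_angel (α : Game V) (X Y : Set (V → ℝ)) :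
    angel α X Y = dglAngel α.sys (X ∩ Y) ∪ dglAngel α X :=
  (main_both α).1 X Y
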